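/- For any tiling T of a convex n-gon with Scott permutation σ = Scott(T), there is no vertex i with σ(i) = i+1 (indices mod n). -/

import Mathlib

open scoped Classical

/-!  Combinatorial model of tilings of a convex `n`-gon.
The vertices of the polygon are `ZMod n`, listed clockwise as `0,1,...,n-1`.
A tile is recorded as the finset of its vertices. -/

/-- The next vertex of `Q` strictly clockwise after `a`. -/
noncomputable def cnext (n : ℕ) (Q : Finset (ZMod n)) (a : ZMod n) : ZMod n :=
  if h : ∃ k : ℕ, 0 < k ∧ k ≤ n ∧ a + (k : ZMod n) ∈ Q then
    a + ((Nat.find h : ℕ) : ZMod n)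
  else a

/-- The previous vertex of `Q` strictly anticlockwise before `a`. -/
noncomputable def cprev (n : ℕ) (Q : Finset (ZMod n)) (a : ZMod n) : ZMod n :=
  if h : ∃ k : ℕ, 0 < k ∧ k ≤ n ∧ a - (k : ZMod n) ∈ Q then
    a - ((Nat.find h : ℕ) : ZMod n)
  else a

/-- `(a,b)` is a (directed, clockwise) edge of the tile `Q`:
`b` is the next vertex of `Q` clockwise after `a`. -/
noncomputable def IsEdge (n : ℕ) (Q : Finset (ZMod n)) (a b : ZMod n) : Prop :=
  a ∈ Q ∧ b ∈ Q ∧ a ≠ b ∧ b = cnext n Q a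

/-- `x` lies strictly inside the clockwise arc from `a` to `b`. -/
def Between (n : ℕ) (a x b : ZMod n) : Prop :=
  0 < (x - a).val ∧ (x - a).val < (b - a).val

/-- The chords `{a,b}` and `{c,d}` of a convex `m`-gon cross in its interior. -/
def Crosses (m : ℕ) (a b c d : ZMod m) : Prop :=
  Between m a c b ∧ Between m b d a

/-- A tiling of the convex `n`-gon by pairwise non-crossing diagonals, recorded by
its set of tiles.  Every tile has at least 3 vertices, every boundary edge
`[i,i+1]` is an edge of exactly one tile, every diagonal (non-boundary edge of a
tile) is shared with exactly one other tile (traversed in the opposite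
direction), two distinct tiles meet in at most one edge, and edges of tiles do
not cross. -/
structure PolygonTiling (n : ℕ) where
  tiles : Finset (Finset (ZMod n))
  three_le : ∀ Q ∈ tiles, 3 ≤ Q.card
  boundary_edge : ∀ i : ZMod n, ∃! Q, Q ∈ tiles ∧ IsEdge n Q i (i + 1)
  diag_shared : ∀ Q ∈ tiles, ∀ a b : ZMod n, IsEdge n Q a b → b ≠ a + 1 →
    ∃! Q', Q' ∈ tiles ∧ Q' ≠ Q ∧ IsEdge n Q' b a
  inter_small : ∀ Q ∈ tiles, ∀ Q' ∈ tiles, Q ≠ Q' → (Q ∩ Q').card ≤ 2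
  noncross : ∀ Q ∈ tiles, ∀ Q' ∈ tiles, ∀ a b c d : ZMod n,
    IsEdge n Q a b → IsEdge n Q' c d → ¬ Crosses n a b c d

/-- The set of diagonals of a tiling, as unordered pairs of vertices. -/
def diagonalsSet (n : ℕ) (T : PolygonTiling n) : Set (Finset (ZMod n)) :=
  {e | ∃ Q ∈ T.tiles, ∃ a b : ZMod n, IsEdge n Q a b ∧ b ≠ a + 1 ∧ e = {a, b}}

/-- One step of Scott's strand construction.  A state `(Q, a)` means the strand is
entering tile `Q` through its directed edge `(a, cnext Q a)`.  Inside `Q` the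
strand uses the segment parallel to the edge `[cprev Q a, a]`, oriented from `a`
towards `p := cprev Q a`, leaving `Q` through the edge `(pp, p)` where
`pp := cprev Q p`.  If that edge is a boundary edge the strand terminates at the
vertex `p`; otherwise it continues into the unique other tile having this edge. -/
noncomputable def scottStep (n : ℕ) (T : PolygonTiling n) :
    Finset (ZMod n) × ZMod n → (Finset (ZMod n) × ZMod n) ⊕ ZMod n := fun s =>
  let Q := s.1
  let a := s.2
  let p := cprev n Q a
  let pp := cprev n Q p
  if p = pp + 1 then Sum.inr p
  else if h : ∃ Q', Q' ∈ T.tiles ∧ Q' ≠ Q ∧ IsEdge n Q' p pp then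
    Sum.inl (Classical.choose h, p)
  else Sum.inr p

/-- The tile in which the strand starting at vertex `x` begins: the unique tile
containing the boundary edge `(x, x+1)`. -/
noncomputable def startTile (n : ℕ) (T : PolygonTiling n) (x : ZMod n) :
    Finset (ZMod n) :=
  Classical.choose (T.boundary_edge x)

/-- The sequence of states of the strand starting at vertex `x`
(`none` after the strand has terminated). -/
noncomputable def strandSeq (n : ℕ) (T : PolygonTiling n) (x : ZMod n) :
    ℕ → Option (Finset (ZMod n) × ZMod n)
  | 0 => some (startTile n T x, x)
  | k + 1 =>
    match strandSeq n T x k with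
    | none => none
    | some s =>
      match scottStep n T s with
      | Sum.inl s' => some s'
      | Sum.inr _ => none

/-- The strand starting at `x` uses a strand segment of tile `Q`, entering `Q`
in state `s = (Q, a)`. -/
def StrandVisits (n : ℕ) (T : PolygonTiling n) (x : ZMod n)
    (s : Finset (ZMod n) × ZMod n) : Prop :=
  ∃ k : ℕ, strandSeq n T x k = some s

/-- Follow a strand for at most `fuel` steps, returning its final vertex. -/
noncomputable def scottRun (n : ℕ) (T : PolygonTiling n) :
    ℕ → Finset (ZMod n) × ZMod n → ZMod n
  | 0, s => s.2
  | k + 1, s =>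
    match scottStep n T s with
    | Sum.inr y => y
    | Sum.inl s' => scottRun n T k s'

/-- The Scott map of the tiling `T`: the strand starting at vertex `x` ends at
vertex `scott n T x`.  (A strand uses at most one segment per tile, so
`T.tiles.card` steps always suffice.) -/
noncomputable def scott (n : ℕ) (T : PolygonTiling n) (x : ZMod n) : ZMod n :=
  scottRun n T T.tiles.card (startTile n T x, x)

/-- A triangulation: all tiles are triangles. -/
def IsTriangulation (n : ℕ) (T : PolygonTiling n) : Prop :=
  ∀ Q ∈ T.tiles, Q.card = 3

/-- An ear of a tiling: a tile exactly one of whose edges is a diagonal. -/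
noncomputable def IsEar (n : ℕ) (T : PolygonTiling n) (Q : Finset (ZMod n)) : Prop :=
  Q ∈ T.tiles ∧ ∃! p : ZMod n × ZMod n, IsEdge n Q p.1 p.2 ∧ p.2 ≠ p.1 + 1

/-- A vertex is simple if it is not an endpoint of any diagonal. -/
def IsSimpleVertex (n : ℕ) (T : PolygonTiling n) (v : ZMod n) : Prop :=
  ∀ e ∈ diagonalsSet n T, v ∉ e

/-- The open dual graph of a tiling: one vertex per tile, two tiles adjacent iff
they share a diagonal. -/
noncomputable def dualGraph (n : ℕ) (T : PolygonTiling n) :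
    SimpleGraph {Q // Q ∈ T.tiles} where
  Adj Q Q' := Q ≠ Q' ∧ ∃ a b : ZMod n, b ≠ a + 1 ∧
    ((IsEdge n Q.1 a b ∧ IsEdge n Q'.1 b a) ∨ (IsEdge n Q.1 b a ∧ IsEdge n Q'.1 a b))
  symm := by
    refine ⟨?_⟩
    rintro Q Q' ⟨hne, a, b, hb, h⟩
    refine ⟨hne.symm, a, b, hb, ?_⟩
    rcases h with ⟨h1, h2⟩ | ⟨h1, h2⟩
    · exact Or.inr ⟨h2, h1⟩
    · exact Or.inl ⟨h2, h1⟩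
  loopless := by refine ⟨?_⟩; rintro Q ⟨hne, -⟩; exact hne rfl

/-- `T'` is obtained from `T` by a single flip: a quadrilateral `a,b,c,d`
(clockwise) tiled by the triangles `{a,b,c}, {a,c,d}` (diagonal `[a,c]`) is
retiled by the triangles `{a,b,d}, {b,c,d}` (diagonal `[b,d]`). -/
def FlipStep (n : ℕ) (T T' : PolygonTiling n) : Prop :=
  ∃ a b c d : ZMod n, Between n a b c ∧ Between n c d a ∧
    ({a, b, c} : Finset (ZMod n)) ∈ T.tiles ∧ ({a, c, d} : Finset (ZMod n)) ∈ T.tiles ∧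
    T'.tiles = (T.tiles \ {({a, b, c} : Finset (ZMod n)), {a, c, d}}) ∪ {{a, b, d}, {b, c, d}}

/-- Flip equivalence: the equivalence relation generated by flips. -/
def FlipEquiv (n : ℕ) (T T' : PolygonTiling n) : Prop :=
  Relation.EqvGen (FlipStep n) T T'

/-- The midpoint of the (clockwise) tile edge starting at vertex `a`, recorded as
a vertex of the refined `2n`-gon (vertex `v` of the polygon becomes `2v`). -/
def midpt (n : ℕ) (a : ZMod n) : ZMod (2 * n) := ((2 * a.val + 1 : ℕ) : ZMod (2 * n))

/-- The first vertex of the edge through which the strand segment entering tile `Q`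
in state `(Q,a)` leaves `Q`. -/
noncomputable def segTarget (n : ℕ) (Q : Finset (ZMod n)) (a : ZMod n) : ZMod n :=
  cprev n Q (cprev n Q a)

/-- The strand segments of tile `Q` entering in states `(Q,a)` and `(Q,c)` cross
inside `Q` (their chords, joining midpoints of edges of `Q`, interleave). -/
noncomputable def SegCross (n : ℕ) (Q : Finset (ZMod n)) (a c : ZMod n) : Prop :=
  Crosses (2 * n) (midpt n a) (midpt n (segTarget n Q a))
    (midpt n c) (midpt n (segTarget n Q c))

/-- The set of tiles inside which the strands starting at `x` and at `y` cross. -/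
noncomputable def crossingTiles (n : ℕ) (T : PolygonTiling n) (x y : ZMod n) :
    Set (Finset (ZMod n)) :=
  {Q | Q ∈ T.tiles ∧ ∃ a c : ZMod n,
    StrandVisits n T x (Q, a) ∧ StrandVisits n T y (Q, c) ∧ SegCross n Q a c}

/-- `v` lies on the closed clockwise arc from `i` to `j`. -/
def InArc (n : ℕ) (i j v : ZMod n) : Prop := (v - i).val ≤ (j - i).val

/-! Invariant: whenever the strand starting at `i` enters a tile `Q` through its edge
`(a, cnext a)`, the vertex `i + 1` lies on the half-open arc `(a, cnext a]`. Inside `Q` the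
strand runs parallel to `[cprev a, a]` and leaves through the edge ending at `cprev a`; since
the vertices of `Q` run clockwise `cprev a, a, cnext a, …, cprev (cprev a)`, the arc
`(a, cnext a]` lies inside the arc `(cprev a, cprev (cprev a)]` behind the exit edge, so the
invariant passes to the next tile. If the strand stops instead, it ends at `cprev a`, which is
not on `(a, cnext a]` because `Q` has at least three vertices. Initially `a = i` and
`cnext a = i + 1`. -/

theorem ZMod.val_sub_comm_of_ne {n : ℕ} [NeZero n] {a x : ZMod n} (h : x ≠ a) :
    (a - x).val = n - (x - a).val := by
  have : NeZero (x - a) := ⟨sub_ne_zero.mpr h⟩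
  rw [← neg_sub, ZMod.val_neg_of_ne_zero]

namespace InArc

variable {n : ℕ} [NeZero n] {a b c p y : ZMod n}

theorem antisymm (hc : InArc n a b c) (hb : InArc n a c b) : b = c := by
  have h : b - a = c - a := ZMod.val_injective n (le_antisymm hb hc)
  simpa using h

theorem extend_start (ha : InArc n p b a) (hy : InArc n a b y) : InArc n p b y := by
  have hpy : (y - p).val ≤ (y - a).val + (a - p).val := by
    simpa using ZMod.val_add_le (y - a) (a - p)
  have hpb : (b - a).val = (b - p).val - (a - p).val := by
    simpa using ZMod.val_sub ha
  unfold InArc at *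
  omega

/-- Cyclic rotation of three points: clockwise order `a, b, p` is also `p, a, b`. -/
theorem rotate (hb : InArc n a p b) (hbp : b ≠ p) : InArc n p b a := by
  rcases eq_or_ne a p with rfl | hap
  · simp [InArc]
  have hlt : (b - a).val < (p - a).val :=
    lt_of_le_of_ne hb fun h => hbp (by simpa using ZMod.val_injective n h)
  have hap' := ZMod.val_sub_comm_of_ne hap.symm
  have hbp' : (b - p).val = (b - a).val + (a - p).val := by
    rw [← ZMod.val_add_of_lt (by have := ZMod.val_lt (p - a); omega)]
    congr 1; ring
  unfold InArc
  omega

end InArc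

section TileVertices

variable {n : ℕ} [NeZero n] {Q : Finset (ZMod n)} {a x y : ZMod n}

theorem cnext_mem (ha : a ∈ Q) : cnext n Q a ∈ Q := by
  have hex : ∃ k : ℕ, 0 < k ∧ k ≤ n ∧ a + (k : ZMod n) ∈ Q :=
    ⟨n, NeZero.pos n, le_rfl, by simpa using ha⟩
  rw [cnext, dif_pos hex]
  exact (Nat.find_spec hex).2.2

theorem cprev_mem (ha : a ∈ Q) : cprev n Q a ∈ Q := by
  have hex : ∃ k : ℕ, 0 < k ∧ k ≤ n ∧ a - (k : ZMod n) ∈ Q :=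
    ⟨n, NeZero.pos n, le_rfl, by simpa using ha⟩
  rw [cprev, dif_pos hex]
  exact (Nat.find_spec hex).2.2

theorem exists_cnext_eq_add (ha : a ∈ Q) (hx : x ∈ Q) (hxa : x ≠ a) :
    ∃ k : ℕ, 0 < k ∧ k ≤ (x - a).val ∧ cnext n Q a = a + k := by
  have hex : ∃ k : ℕ, 0 < k ∧ k ≤ n ∧ a + (k : ZMod n) ∈ Q :=
    ⟨n, NeZero.pos n, le_rfl, by simpa using ha⟩
  refine ⟨Nat.find hex, (Nat.find_spec hex).1, Nat.find_min' hex ?_, by rw [cnext, dif_pos hex]⟩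
  exact ⟨ZMod.val_pos.mpr (sub_ne_zero.mpr hxa), (ZMod.val_lt _).le, by simpa using hx⟩

theorem exists_cprev_eq_sub (ha : a ∈ Q) (hx : x ∈ Q) (hxa : x ≠ a) :
    ∃ k : ℕ, 0 < k ∧ k ≤ (a - x).val ∧ cprev n Q a = a - k := by
  have hex : ∃ k : ℕ, 0 < k ∧ k ≤ n ∧ a - (k : ZMod n) ∈ Q :=
    ⟨n, NeZero.pos n, le_rfl, by simpa using ha⟩
  refine ⟨Nat.find hex, (Nat.find_spec hex).1, Nat.find_min' hex ?_, by rw [cprev, dif_pos hex]⟩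
  exact ⟨ZMod.val_pos.mpr (sub_ne_zero.mpr hxa.symm), (ZMod.val_lt _).le, by simpa using hx⟩

theorem cnext_ne_self (hQ : 1 < Q.card) (ha : a ∈ Q) : cnext n Q a ≠ a := by
  obtain ⟨x, hx, hxa⟩ := Q.exists_mem_ne hQ a
  obtain ⟨k, hk0, hkx, hk⟩ := exists_cnext_eq_add ha hx hxa
  have hval : (cnext n Q a - a).val = k := by
    rw [hk, add_sub_cancel_left, ZMod.val_cast_of_lt (hkx.trans_lt (ZMod.val_lt _))]
  intro h
  rw [h, sub_self, ZMod.val_zero] at hval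
  omega

theorem inArc_cnext (ha : a ∈ Q) (hx : x ∈ Q) (hxa : x ≠ a) : InArc n a x (cnext n Q a) := by
  obtain ⟨k, -, hkx, hk⟩ := exists_cnext_eq_add ha hx hxa
  unfold InArc
  rwa [hk, add_sub_cancel_left, ZMod.val_cast_of_lt (hkx.trans_lt (ZMod.val_lt _))]

theorem inArc_cprev (ha : a ∈ Q) (hx : x ∈ Q) (hxa : x ≠ a) : InArc n a (cprev n Q a) x := by
  obtain ⟨k, hk0, hkx, hk⟩ := exists_cprev_eq_sub ha hx hxa
  have hkn : k < n := hkx.trans_lt (ZMod.val_lt _)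
  have : NeZero (k : ZMod n) := ⟨by
    rw [Ne, ← ZMod.val_eq_zero, ZMod.val_cast_of_lt hkn]; omega⟩
  have hval : (cprev n Q a - a).val = n - k := by
    rw [hk, sub_sub_cancel_left, ZMod.val_neg_of_ne_zero, ZMod.val_cast_of_lt hkn]
  unfold InArc
  rw [hval]
  have := ZMod.val_sub_comm_of_ne hxa
  omega

theorem cprev_ne_cnext (hQ : 3 ≤ Q.card) (ha : a ∈ Q) : cprev n Q a ≠ cnext n Q a := by
  intro h
  obtain ⟨c, hc, hca, hcb⟩ : ∃ c ∈ Q, c ≠ a ∧ c ≠ cnext n Q a := by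
    by_contra! hnone
    have : Q ⊆ {a, cnext n Q a} := fun c hc => by
      by_cases hca : c = a
      · simp [hca]
      · simp [hnone c hc hca]
    have := (Finset.card_le_card this).trans (Finset.card_le_two)
    omega
  have hcQ := inArc_cprev ha hc hca
  rw [h] at hcQ
  exact hcb (InArc.antisymm hcQ (inArc_cnext ha hc hca)).symm

theorem inArc_cprev_cprev (hQ : 3 ≤ Q.card) (ha : a ∈ Q) (hy : InArc n a (cnext n Q a) y) :
    InArc n (cprev n Q a) (cprev n Q (cprev n Q a)) y := by
  have hbQ := cnext_mem ha
  have hbp := (cprev_ne_cnext hQ ha).symm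
  have hab : InArc n (cprev n Q a) (cnext n Q a) a :=
    (inArc_cprev ha hbQ (cnext_ne_self (by omega) ha)).rotate hbp
  exact le_trans (hab.extend_start hy) (inArc_cprev (cprev_mem ha) hbQ hbp)

theorem cprev_ne_of_inArc_cnext (hQ : 3 ≤ Q.card) (ha : a ∈ Q)
    (hy : InArc n a (cnext n Q a) y) : cprev n Q a ≠ y := by
  rintro rfl
  exact cprev_ne_cnext hQ ha
    (InArc.antisymm (inArc_cprev ha (cnext_mem ha) (cnext_ne_self (by omega) ha)) hy)

end TileVertices

theorem scottStep_eq_inr_or_exists (n : ℕ) (T : PolygonTiling n) (s : Finset (ZMod n) × ZMod n) :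
    scottStep n T s = Sum.inr (cprev n s.1 s.2) ∨
      ∃ Q' ∈ T.tiles, IsEdge n Q' (cprev n s.1 s.2) (cprev n s.1 (cprev n s.1 s.2)) ∧
        scottStep n T s = Sum.inl (Q', cprev n s.1 s.2) := by
  dsimp only [scottStep]
  split_ifs with _ hnext
  · exact Or.inl rfl
  · obtain ⟨hQ', -, hedge⟩ := Classical.choose_spec hnext
    exact Or.inr ⟨_, hQ', hedge, rfl⟩
  · exact Or.inl rfl

theorem scottRun_ne {n : ℕ} [NeZero n] {T : PolygonTiling n} {y : ZMod n} (fuel : ℕ)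
    (s : Finset (ZMod n) × ZMod n) (hs : s.1 ∈ T.tiles) (ha : s.2 ∈ s.1) (hay : s.2 ≠ y)
    (hy : InArc n s.2 (cnext n s.1 s.2) y) : scottRun n T fuel s ≠ y := by
  induction fuel generalizing s with
  | zero => exact hay
  | succ k ih =>
    obtain ⟨Q, a⟩ := s
    have hQ := T.three_le Q hs
    rcases scottStep_eq_inr_or_exists n T (Q, a) with hstop | ⟨Q', hQ', hedge, hnext⟩
    · rw [scottRun, hstop]
      exact cprev_ne_of_inArc_cnext hQ ha hy
    · rw [scottRun, hnext]
      exact ih (Q', cprev n Q a) hQ' hedge.1 (cprev_ne_of_inArc_cnext hQ ha hy)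
        (hedge.2.2.2 ▸ inArc_cprev_cprev hQ ha hy)

theorem stmt9 (n : ℕ) (hn : 3 ≤ n) (T : PolygonTiling n) (i : ZMod n) :
    scott n T i ≠ i + 1 := by
  have : NeZero n := ⟨by omega⟩
  obtain ⟨⟨hQ, hedge⟩, -⟩ := Classical.choose_spec (T.boundary_edge i)
  have hnext : cnext n (startTile n T i) i = i + 1 := hedge.2.2.2.symm
  have hstart : InArc n i (cnext n (startTile n T i) i) (i + 1) := by
    rw [hnext]
    exact le_rfl
  exact scottRun_ne _ (startTile n T i, i) hQ hedge.1 hedge.2.2.1 hstart
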